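/- arXiv:1207.0910 — 2 statements merged into one kernel-verified Lean document; each statement's English description precedes it below -/
import Mathlib

section
/- Let q : ℝ^m → ℝ^N be a second-order random vector with covariance C and W a symmetric positive definite matrix. Among all families {e^1, ..., e^d} of W-orthonormal vectors in ℝ^N, the projection error ∫ ‖(q − q̄) − Σ_{j=1}^d ((q − q̄)^T W e^j) e^j‖_W² dP_ξ is minimized by taking e^j equal to the first d W-orthonormal generalized eigenvectors of W^T C W φ = λ W φ (ordered by decreasing eigenvalue), and the minimal error equals Σ_{j=d+1}^N λ_j. -/
open MeasureTheory Matrix Finset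

/-!
In the basis `φ` the `W`-inner product is the Euclidean one, and `Wᵀ C W φ_k = λ_k W φ_k`
makes the quadratic form `v ↦ (W v)ᵀ C (W v)` diagonal: it equals `∑_k λ_k (vᵀ W φ_k)²`.
By Pythagoras and Parseval, the expected error of a `W`-orthonormal family `e` is therefore
`∑_k λ_k - ∑_k λ_k t_k` with `t_k = ∑_j (e_jᵀ W φ_k)²`. Bessel's inequality gives `0 ≤ t_k ≤ 1`,
and `∑_k t_k = d`; for decreasing `λ` such weights give `∑_k λ_k t_k ≤ λ_1 + ⋯ + λ_d`, with
equality for `e_j = φ_j`.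
-/

def WOrthonormal {n ι : Type*} [Fintype n] [DecidableEq ι] (W : Matrix n n ℝ)
    (e : ι → n → ℝ) : Prop :=
  ∀ i j, e i ⬝ᵥ (W *ᵥ e j) = if i = j then 1 else 0

section LinearAlgebra

variable {n : Type*} [Fintype n] {W : Matrix n n ℝ}

lemma Matrix.IsSymm.dotProduct_mulVec_comm (hW : W.IsSymm) (a b : n → ℝ) :
    a ⬝ᵥ (W *ᵥ b) = b ⬝ᵥ (W *ᵥ a) := by
  rw [dotProduct_mulVec, ← mulVec_transpose, hW.eq, dotProduct_comm]

lemma dotProduct_mulVec_sum_smul {ι : Type*} (W : Matrix n n ℝ) (a : n → ℝ) (s : Finset ι)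
    (c : ι → ℝ) (g : ι → n → ℝ) :
    a ⬝ᵥ (W *ᵥ ∑ j ∈ s, c j • g j) = ∑ j ∈ s, c j * (a ⬝ᵥ (W *ᵥ g j)) := by
  simp [mulVec_sum, dotProduct_sum, mulVec_smul]

lemma mulVec_dotProduct_mulVec (W C : Matrix n n ℝ) (u v : n → ℝ) :
    (W *ᵥ u) ⬝ᵥ (C *ᵥ (W *ᵥ v)) = u ⬝ᵥ ((Wᵀ * C * W) *ᵥ v) := by
  rw [← vecMul_transpose, ← dotProduct_mulVec, mulVec_mulVec, mulVec_mulVec, Matrix.mul_assoc]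

lemma WOrthonormal.quadForm_sub_proj {ι : Type*} [Fintype ι] [DecidableEq ι] (hW : W.IsSymm)
    {e : ι → n → ℝ} (he : WOrthonormal W e) (y : n → ℝ) :
    (y - ∑ j, (y ⬝ᵥ (W *ᵥ e j)) • e j) ⬝ᵥ (W *ᵥ (y - ∑ j, (y ⬝ᵥ (W *ᵥ e j)) • e j)) =
      y ⬝ᵥ (W *ᵥ y) - ∑ j, (y ⬝ᵥ (W *ᵥ e j)) ^ 2 := by
  set c := fun j => y ⬝ᵥ (W *ᵥ e j)
  set s := ∑ j, c j • e j
  have hys : y ⬝ᵥ (W *ᵥ s) = ∑ j, c j ^ 2 := by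
    simp only [s, dotProduct_mulVec_sum_smul, sq, c]
  have hes (i : ι) : e i ⬝ᵥ (W *ᵥ s) = c i := by
    simp [s, dotProduct_mulVec_sum_smul, he i]
  have hss : s ⬝ᵥ (W *ᵥ s) = ∑ j, c j ^ 2 := by
    calc s ⬝ᵥ (W *ᵥ s) = ∑ j, c j * (s ⬝ᵥ (W *ᵥ e j)) := dotProduct_mulVec_sum_smul W s _ c e
      _ = ∑ j, c j ^ 2 := by simp_rw [hW.dotProduct_mulVec_comm s, hes, sq]
  rw [mulVec_sub, sub_dotProduct, dotProduct_sub, dotProduct_sub, hys,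
    hW.dotProduct_mulVec_comm s, hys, hss]
  ring

variable [DecidableEq n] {φ : n → n → ℝ}

/-- The `φ k` form a basis: for the square matrix `P` with rows `φ k`, `P W Pᵀ = 1` forces
`Pᵀ (P W) = 1`. -/
lemma WOrthonormal.eq_sum_smul (hφ : WOrthonormal W φ) (v : n → ℝ) :
    v = ∑ k, (φ k ⬝ᵥ (W *ᵥ v)) • φ k := by
  set P : Matrix n n ℝ := Matrix.of φ
  have hP : P * W * Pᵀ = 1 := by
    ext i j
    rw [one_apply, ← hφ i j, dotProduct_mulVec]
    simp [P, Matrix.mul_apply, vecMul, dotProduct]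
  have hP' : Pᵀ * (P * W) = 1 := mul_eq_one_comm.mp hP
  have hcols (c : n → ℝ) : Pᵀ *ᵥ c = ∑ k, c k • φ k := by
    ext i
    simp [P, mulVec, dotProduct, Finset.sum_apply, mul_comm]
  calc v = Pᵀ *ᵥ (P *ᵥ (W *ᵥ v)) := by rw [mulVec_mulVec v P W, mulVec_mulVec, hP', one_mulVec]
    _ = _ := hcols _

lemma WOrthonormal.quadForm_eq_sum_sq (hW : W.IsSymm) (hφ : WOrthonormal W φ) (y : n → ℝ) :
    y ⬝ᵥ (W *ᵥ y) = ∑ k, (y ⬝ᵥ (W *ᵥ φ k)) ^ 2 := by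
  nth_rewrite 2 [hφ.eq_sum_smul y]
  simp_rw [dotProduct_mulVec_sum_smul, hW.dotProduct_mulVec_comm (φ _) y, sq]

lemma WOrthonormal.quadForm_nonneg (hW : W.IsSymm) (hφ : WOrthonormal W φ) (y : n → ℝ) :
    0 ≤ y ⬝ᵥ (W *ᵥ y) :=
  hφ.quadForm_eq_sum_sq hW y ▸ sum_nonneg fun _ _ => sq_nonneg _

lemma WOrthonormal.sum_sq_le_quadForm {ι : Type*} [Fintype ι] [DecidableEq ι] (hW : W.IsSymm)
    (hφ : WOrthonormal W φ) {e : ι → n → ℝ} (he : WOrthonormal W e) (y : n → ℝ) :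
    ∑ j, (y ⬝ᵥ (W *ᵥ e j)) ^ 2 ≤ y ⬝ᵥ (W *ᵥ y) := by
  have := hφ.quadForm_nonneg hW (y - ∑ j, (y ⬝ᵥ (W *ᵥ e j)) • e j)
  rw [he.quadForm_sub_proj hW] at this
  linarith

variable {C : Matrix n n ℝ} {lam : n → ℝ}

lemma WOrthonormal.mulVec_dotProduct_mulVec_self (hφ : WOrthonormal W φ)
    (heig : ∀ k, (Wᵀ * C * W) *ᵥ φ k = lam k • (W *ᵥ φ k)) (k : n) :
    (W *ᵥ φ k) ⬝ᵥ (C *ᵥ (W *ᵥ φ k)) = lam k := by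
  rw [mulVec_dotProduct_mulVec, heig, dotProduct_smul, hφ k k, if_pos rfl, smul_eq_mul, mul_one]

lemma WOrthonormal.mulVec_dotProduct_mulVec_eq_sum (hW : W.IsSymm) (hφ : WOrthonormal W φ)
    (heig : ∀ k, (Wᵀ * C * W) *ᵥ φ k = lam k • (W *ᵥ φ k)) (v : n → ℝ) :
    (W *ᵥ v) ⬝ᵥ (C *ᵥ (W *ᵥ v)) = ∑ k, lam k * (v ⬝ᵥ (W *ᵥ φ k)) ^ 2 := by
  rw [mulVec_dotProduct_mulVec]
  nth_rewrite 2 [hφ.eq_sum_smul v]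
  simp_rw [mulVec_sum, mulVec_smul, heig, dotProduct_sum, dotProduct_smul, smul_eq_mul,
    hW.dotProduct_mulVec_comm (φ _) v]
  exact sum_congr rfl fun k _ => by ring

end LinearAlgebra

section Moments

variable {Ω n : Type*} [MeasurableSpace Ω] [Fintype n] {μ : Measure Ω} {Y : Ω → n → ℝ}

lemma memLp_dotProduct (hY : ∀ i, MemLp (fun x => Y x i) 2 μ) (u : n → ℝ) :
    MemLp (fun x => Y x ⬝ᵥ u) 2 μ := by
  simp only [dotProduct]
  exact memLp_finsetSum _ fun i _ => (hY i).mul_const (u i)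

lemma integral_dotProduct_sq (hY : ∀ i, MemLp (fun x => Y x i) 2 μ) {C : Matrix n n ℝ}
    (hC : ∀ i j, C i j = ∫ x, Y x i * Y x j ∂μ) (u : n → ℝ) :
    ∫ x, (Y x ⬝ᵥ u) ^ 2 ∂μ = u ⬝ᵥ (C *ᵥ u) := by
  have hint (i j : n) : Integrable (fun x => u i * u j * (Y x i * Y x j)) μ :=
    ((hY i).integrable_mul (hY j)).const_mul _
  have hexp (x : Ω) : (Y x ⬝ᵥ u) ^ 2 = ∑ i, ∑ j, u i * u j * (Y x i * Y x j) := by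
    simp only [sq, dotProduct, sum_mul_sum]
    exact sum_congr rfl fun i _ => sum_congr rfl fun j _ => by ring
  simp_rw [hexp]
  rw [integral_finsetSum _ fun i _ => integrable_finsetSum _ fun j _ => hint i j]
  simp_rw [integral_finsetSum _ fun j _ => hint _ j, integral_const_mul, ← hC]
  simp only [dotProduct, mulVec, mul_sum]
  exact sum_congr rfl fun i _ => sum_congr rfl fun j _ => by ring

lemma WOrthonormal.integral_quadForm_sub_proj [DecidableEq n] {ι : Type*} [Fintype ι]
    [DecidableEq ι] (hY : ∀ i, MemLp (fun x => Y x i) 2 μ) {C W : Matrix n n ℝ}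
    (hC : ∀ i j, C i j = ∫ x, Y x i * Y x j ∂μ) (hW : W.IsSymm) {φ : n → n → ℝ} {lam : n → ℝ}
    (hφ : WOrthonormal W φ) (heig : ∀ k, (Wᵀ * C * W) *ᵥ φ k = lam k • (W *ᵥ φ k))
    {e : ι → n → ℝ} (he : WOrthonormal W e) :
    ∫ x, (let r := Y x - ∑ j, (Y x ⬝ᵥ (W *ᵥ e j)) • e j
          r ⬝ᵥ (W *ᵥ r)) ∂μ =
      ∑ k, lam k - ∑ j, (W *ᵥ e j) ⬝ᵥ (C *ᵥ (W *ᵥ e j)) := by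
  have hpt (x : Ω) : (let r := Y x - ∑ j, (Y x ⬝ᵥ (W *ᵥ e j)) • e j
      r ⬝ᵥ (W *ᵥ r)) = ∑ k, (Y x ⬝ᵥ (W *ᵥ φ k)) ^ 2 - ∑ j, (Y x ⬝ᵥ (W *ᵥ e j)) ^ 2 := by
    rw [← hφ.quadForm_eq_sum_sq hW]
    exact he.quadForm_sub_proj hW (Y x)
  have hint (v : n → ℝ) : Integrable (fun x => (Y x ⬝ᵥ v) ^ 2) μ :=
    (memLp_dotProduct hY v).integrable_sq
  simp_rw [hpt]
  rw [integral_sub (integrable_finsetSum _ fun k _ => hint _)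
    (integrable_finsetSum _ fun j _ => hint _), integral_finsetSum _ fun k _ => hint _,
    integral_finsetSum _ fun j _ => hint _]
  simp_rw [integral_dotProduct_sq hY hC, hφ.mulVec_dotProduct_mulVec_self heig]

end Moments

section Extremal

lemma sum_mul_le_sum_of_threshold {ι : Type*} [Fintype ι] (S : Finset ι) {lam t : ι → ℝ}
    {c : ℝ} (hS : ∀ k ∈ S, c ≤ lam k) (hSc : ∀ k ∉ S, lam k ≤ c) (ht0 : ∀ k, 0 ≤ t k)
    (ht1 : ∀ k, t k ≤ 1) (ht : ∑ k, t k = #S) : ∑ k, lam k * t k ≤ ∑ k ∈ S, lam k := by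
  classical
  have hterm (k : ι) : (lam k - c) * (t k - if k ∈ S then 1 else 0) ≤ 0 := by
    split_ifs with hk
    · exact mul_nonpos_of_nonneg_of_nonpos (sub_nonneg.2 (hS k hk)) (sub_nonpos.2 (ht1 k))
    · simpa using mul_nonpos_of_nonpos_of_nonneg (sub_nonpos.2 (hSc k hk)) (ht0 k)
  have hsum : ∑ k, (lam k - c) * (t k - if k ∈ S then 1 else 0) =
      ∑ k, lam k * t k - ∑ k ∈ S, lam k - c * (∑ k, t k - #S) := by
    simp only [mul_sub, sub_mul, sum_sub_distrib, mul_ite, mul_one, mul_zero, sum_ite_mem,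
      univ_inter, ← mul_sum, sum_const, nsmul_eq_mul]
    ring
  rw [ht, sub_self, mul_zero, sub_zero] at hsum
  linarith [sum_nonpos fun k (_ : k ∈ univ) => hterm k]

lemma Antitone.exists_threshold {N d : ℕ} (hd : d ≤ N) {lam : Fin N → ℝ} (h : Antitone lam) :
    ∃ c, (∀ k : Fin N, (k : ℕ) < d → c ≤ lam k) ∧ ∀ k : Fin N, d ≤ (k : ℕ) → lam k ≤ c := by
  rcases hd.lt_or_eq with hlt | rfl
  · exact ⟨lam ⟨d, hlt⟩, fun k hk => h (Fin.mk_le_of_le_val hk.le),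
      fun k hk => h (Fin.mk_le_of_le_val hk)⟩
  · obtain ⟨c, hc⟩ := (Set.finite_range lam).bddBelow
    exact ⟨c, fun k _ => hc ⟨k, rfl⟩, fun k hk => absurd k.isLt (not_lt.2 hk)⟩

lemma WOrthonormal.sum_mulVec_dotProduct_mulVec_le {N d : ℕ} (hd : d ≤ N)
    {C W : Matrix (Fin N) (Fin N) ℝ} (hW : W.IsSymm) {φ : Fin N → Fin N → ℝ}
    {lam : Fin N → ℝ} (hφ : WOrthonormal W φ)
    (heig : ∀ k, (Wᵀ * C * W) *ᵥ φ k = lam k • (W *ᵥ φ k)) (hlam : Antitone lam)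
    {e : Fin d → Fin N → ℝ} (he : WOrthonormal W e) :
    ∑ j, (W *ᵥ e j) ⬝ᵥ (C *ᵥ (W *ᵥ e j)) ≤
      ∑ k ∈ univ.filter (fun k : Fin N => (k : ℕ) < d), lam k := by
  set t : Fin N → ℝ := fun k => ∑ j, (e j ⬝ᵥ (W *ᵥ φ k)) ^ 2
  have hrw : ∑ j, (W *ᵥ e j) ⬝ᵥ (C *ᵥ (W *ᵥ e j)) = ∑ k, lam k * t k := by
    simp_rw [hφ.mulVec_dotProduct_mulVec_eq_sum hW heig, t, mul_sum]
    exact sum_comm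
  have ht1 (k : Fin N) : t k ≤ 1 := by
    simpa [t, hW.dotProduct_mulVec_comm (e _) (φ k), hφ k k]
      using hφ.sum_sq_le_quadForm hW he (φ k)
  have ht : ∑ k, t k = d := by
    simp only [t]
    rw [sum_comm]
    simp_rw [← hφ.quadForm_eq_sum_sq hW, he _ _]
    simp
  have hcard : #(univ.filter fun k : Fin N => (k : ℕ) < d) = d := by
    rw [Fin.card_filter_val_lt, min_eq_right hd]
  obtain ⟨c, hc_lt, hc_ge⟩ := hlam.exists_threshold hd
  rw [hrw]
  exact sum_mul_le_sum_of_threshold _ (fun k hk => hc_lt k (mem_filter.1 hk).2)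
    (fun k hk => hc_ge k (by simpa using hk)) (fun k => sum_nonneg fun j _ => sq_nonneg _) ht1
    (by rw [ht, hcard])

end Extremal

lemma sum_castLE_eq_sum_filter_lt {M : Type*} [AddCommMonoid M] {d N : ℕ} (hd : d ≤ N)
    (f : Fin N → M) :
    ∑ j : Fin d, f (Fin.castLE hd j) = ∑ k ∈ univ.filter (fun k : Fin N => (k : ℕ) < d), f k := by
  refine (sum_map univ (Fin.castLEEmb hd) f).symm.trans ?_
  congr 1
  ext k
  simp only [mem_map, mem_univ, true_and, mem_filter, Fin.castLEEmb_apply]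
  exact ⟨fun ⟨j, hj⟩ => hj ▸ j.isLt, fun hk => ⟨⟨k, hk⟩, rfl⟩⟩

theorem stmt_8_general {m N : ℕ}
    (μ : Measure (Fin m → ℝ)) [IsProbabilityMeasure μ]
    (q : (Fin m → ℝ) → (Fin N → ℝ))
    (hq : ∀ i, MemLp (fun x => q x i) 2 μ)
    (qbar : Fin N → ℝ)
    (C W : Matrix (Fin N) (Fin N) ℝ)
    (hC : ∀ i j, C i j = ∫ x, (q x i - qbar i) * (q x j - qbar j) ∂μ)
    (hWsymm : W.IsSymm)
    (lam : Fin N → ℝ) (φ : Fin N → (Fin N → ℝ))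
    (hdecr : ∀ i j : Fin N, i ≤ j → lam j ≤ lam i)
    (heig : ∀ j, (Wᵀ * C * W) *ᵥ φ j = lam j • (W *ᵥ φ j))
    (horth : ∀ i j, φ i ⬝ᵥ (W *ᵥ φ j) = if i = j then 1 else 0)
    (d : ℕ) (hd : d ≤ N) :
    (∀ e : Fin d → (Fin N → ℝ),
        (∀ i j, e i ⬝ᵥ (W *ᵥ e j) = if i = j then 1 else 0) →
        (∑ j ∈ Finset.univ.filter (fun j : Fin N => d ≤ (j : ℕ)), lam j) ≤
          ∫ x, (let r := (q x - qbar) - ∑ j : Fin d, ((q x - qbar) ⬝ᵥ (W *ᵥ e j)) • e j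
                r ⬝ᵥ (W *ᵥ r)) ∂μ) ∧
    (∫ x, (let r := (q x - qbar) -
              ∑ j : Fin d, ((q x - qbar) ⬝ᵥ (W *ᵥ φ (Fin.castLE hd j))) • φ (Fin.castLE hd j)
           r ⬝ᵥ (W *ᵥ r)) ∂μ =
        ∑ j ∈ Finset.univ.filter (fun j : Fin N => d ≤ (j : ℕ)), lam j) := by
  have hY : ∀ i, MemLp (fun x => (q x - qbar) i) 2 μ := fun i => (hq i).sub (memLp_const _)
  have htail : ∑ j ∈ univ.filter (fun j : Fin N => d ≤ (j : ℕ)), lam j =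
      ∑ j, lam j - ∑ j ∈ univ.filter (fun j : Fin N => (j : ℕ) < d), lam j := by
    rw [← sum_filter_add_sum_filter_not univ (fun j : Fin N => (j : ℕ) < d) lam]
    simp [not_lt]
  have hφd : WOrthonormal W fun j : Fin d => φ (Fin.castLE hd j) := fun i j => by
    simp [horth _ _, Fin.castLE_inj]
  refine ⟨fun e he => ?_, ?_⟩
  · rw [WOrthonormal.integral_quadForm_sub_proj hY hC hWsymm horth heig he]
    linarith [WOrthonormal.sum_mulVec_dotProduct_mulVec_le hd hWsymm horth heig hdecr he]
  · rw [WOrthonormal.integral_quadForm_sub_proj hY hC hWsymm horth heig hφd]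
    simp_rw [WOrthonormal.mulVec_dotProduct_mulVec_self horth heig]
    rw [sum_castLE_eq_sum_filter_lt hd lam, htail]

/-- Optimality of the (weighted) Karhunen–Loève decomposition.  Among all
`W`-orthonormal families `{e^1,...,e^d}` in `ℝ^N`, the mean-square `W`-weighted projection
error `∫ ‖(q−q̄) − Σ_j ((q−q̄)ᵀ W e^j) e^j‖_W² dμ` is minimized by taking the `e^j` equal to
the first `d` `W`-orthonormal generalized eigenvectors of `Wᵀ C W φ = λ W φ` (ordered by
decreasing eigenvalue), and the minimal error equals `Σ_{j≥d} λ_j`. -/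
theorem stmt_8 {m N : ℕ}
    (μ : Measure (Fin m → ℝ)) [IsProbabilityMeasure μ]
    (q : (Fin m → ℝ) → (Fin N → ℝ))
    (hq : ∀ i, MemLp (fun x => q x i) 2 μ)
    (qbar : Fin N → ℝ) (hqbar : ∀ i, qbar i = ∫ x, q x i ∂μ)
    (C W : Matrix (Fin N) (Fin N) ℝ)
    (hC : ∀ i j, C i j = ∫ x, (q x i - qbar i) * (q x j - qbar j) ∂μ)
    (hWsymm : W.IsSymm) (hW : W.PosDef)
    (lam : Fin N → ℝ) (φ : Fin N → (Fin N → ℝ))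
    (hdecr : ∀ i j : Fin N, i ≤ j → lam j ≤ lam i)
    (heig : ∀ j, (Wᵀ * C * W) *ᵥ φ j = lam j • (W *ᵥ φ j))
    (horth : ∀ i j, φ i ⬝ᵥ (W *ᵥ φ j) = if i = j then 1 else 0)
    (d : ℕ) (hd : d ≤ N) :
    (∀ e : Fin d → (Fin N → ℝ),
        (∀ i j, e i ⬝ᵥ (W *ᵥ e j) = if i = j then 1 else 0) →
        (∑ j ∈ Finset.univ.filter (fun j : Fin N => d ≤ (j : ℕ)), lam j) ≤
          ∫ x, (let r := (q x - qbar) - ∑ j : Fin d, ((q x - qbar) ⬝ᵥ (W *ᵥ e j)) • e j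
                r ⬝ᵥ (W *ᵥ r)) ∂μ) ∧
    (∫ x, (let r := (q x - qbar) -
              ∑ j : Fin d, ((q x - qbar) ⬝ᵥ (W *ᵥ φ (Fin.castLE hd j))) • φ (Fin.castLE hd j)
           r ⬝ᵥ (W *ᵥ r)) ∂μ =
        ∑ j ∈ Finset.univ.filter (fun j : Fin N => d ≤ (j : ℕ)), lam j) :=
  stmt_8_general μ q hq qbar C W hC hWsymm lam φ hdecr heig horth d hd
end

section
/- Let P = P_1 × ... × P_n be a product probability measure on ℝ^n and suppose for each j and each level l ≥ 1 a univariate quadrature rule Q_j^{λ_l} is given which integrates exactly univariate polynomials up to degree 2l−1 with respect to P_j. Then the Smolyak sparse-grid quadrature rule of level λ, Q^λ(f) = Σ_{λ ≤ |l| ≤ λ+n−1} (−1)^{λ+n−1−|l|} C(n−1, λ+n−1−|l|) (Q_1^{λ_{l_1}} ⊗ ... ⊗ Q_n^{λ_{l_n}})(f), integrates exactly all multivariate polynomials of total degree at most 2λ−1 with respect to P. -/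
/-!
With `Δⱼ^i = Qⱼ^i - Qⱼ^{i-1}` (`Qⱼ^0 = 0`), each tensor rule of level `l` is the sum of the
difference tensors `Δ₁^{e₁} ⊗ ⋯ ⊗ Δₙ^{eₙ}` over `1 ≤ e ≤ l`. Exchanging sums, the Smolyak rule
gives the difference index `e` the total weight `∑_{l ≥ e} (-1)^{λ+n-1-|l|} C(n-1, λ+n-1-|l|)`,
which is `1` whenever `|e| ≤ λ+n-1`, as a generating-function computation shows.
On a monomial `y^α` with `|α| ≤ 2λ-1`, exactness makes `Δⱼ^i (t^{αⱼ})` vanish for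
`i > mⱼ = ⌊αⱼ/2⌋ + 1`, and `|m| ≤ λ+n-1`, so the rule returns the full telescoped product
`∏ⱼ Qⱼ^{mⱼ}(t^{αⱼ}) = ∏ⱼ ∫ t^{αⱼ} dPⱼ`, the integral of `y^α` by Fubini.
-/

open MeasureTheory Finset

/-- The fully tensorized quadrature rule with level vector `l`, applied to `f`. -/
def tensorRule {n : ℕ} (K : Fin n → ℕ → ℕ)
    (x : ∀ (j : Fin n) (l : ℕ), Fin (K j l) → ℝ)
    (v : ∀ (j : Fin n) (l : ℕ), Fin (K j l) → ℝ)
    (l : Fin n → ℕ) (f : (Fin n → ℝ) → ℝ) : ℝ :=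
  ∑ k ∈ Fintype.piFinset (fun j => (Finset.univ : Finset (Fin (K j (l j))))),
    (∏ j, v j (l j) (k j)) * f (fun j => x j (l j) (k j))

/-- The Smolyak sparse-grid quadrature rule of level `lam`, applied to `f`:
`Q^λ(f) = Σ_{λ ≤ |l| ≤ λ+n−1} (−1)^{λ+n−1−|l|} C(n−1, λ+n−1−|l|) (Q_1^{l_1} ⊗ ... ⊗ Q_n^{l_n})(f)`,
where each `l_j ≥ 1`. -/
def smolyakRule {n : ℕ} (K : Fin n → ℕ → ℕ)
    (x : ∀ (j : Fin n) (l : ℕ), Fin (K j l) → ℝ)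
    (v : ∀ (j : Fin n) (l : ℕ), Fin (K j l) → ℝ)
    (lam : ℕ) (f : (Fin n → ℝ) → ℝ) : ℝ :=
  ∑ l ∈ (Fintype.piFinset fun _ : Fin n => Finset.Icc 1 (lam + n)).filter
      (fun l => lam ≤ ∑ j, l j ∧ ∑ j, l j ≤ lam + n - 1),
    ((-1 : ℝ) ^ (lam + n - 1 - ∑ j, l j)) *
      (Nat.choose (n - 1) (lam + n - 1 - ∑ j, l j) : ℝ) *
      tensorRule K x v l f

namespace Polynomial

variable {R : Type*} [CommRing R]

theorem coeff_one_sub_X_pow (r t : ℕ) :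
    ((1 - X : R[X]) ^ r).coeff t = (-1) ^ t * r.choose t := by
  rw [sub_eq_neg_add, add_pow, finsetSum_coeff]
  simp only [one_pow, mul_one, neg_pow (X : R[X])]
  simp only [← C_1, ← C_neg, ← C_pow, coeff_mul_natCast, coeff_C_mul_X_pow]
  rw [sum_eq_single t] <;> simp +contextual [Nat.choose_eq_zero_of_lt, eq_comm]

theorem coeff_sum_X_pow_mul_one_sub_X_pow {ι : Type*} (s : Finset ι) (d : ι → ℕ) (r N : ℕ) :
    ((∑ i ∈ s, X ^ d i) * (1 - X : R[X]) ^ r).coeff N =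
      ∑ i ∈ s, if d i ≤ N then (-1) ^ (N - d i) * (r.choose (N - d i) : R) else 0 := by
  rw [sum_mul, finsetSum_coeff]
  refine sum_congr rfl fun i _ => ?_
  rw [coeff_X_pow_mul', coeff_one_sub_X_pow]

theorem coeff_eq_sum_coeff_mul_one_sub_X (p : R[X]) (N : ℕ) :
    p.coeff N = ∑ t ∈ range (N + 1), (p * (1 - X)).coeff t := by
  induction N with
  | zero => simp [mul_one_sub]
  | succ N ih =>
    rw [sum_range_succ, ← ih, mul_one_sub, coeff_sub, coeff_mul_X]
    ring

theorem X_pow_dvd_prod_X_pow_sub_X_pow_sub {ι : Type*} (s : Finset ι) (a : ι → ℕ) (b : ℕ) :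
    (X : R[X]) ^ b ∣ ∏ j ∈ s, (X ^ a j - X ^ b) - X ^ ∑ j ∈ s, a j := by
  rw [← Ideal.mem_span_singleton, ← Ideal.Quotient.eq, map_prod, ← prod_pow_eq_pow_sum, map_prod]
  refine prod_congr rfl fun j _ => ?_
  rw [map_sub, Ideal.Quotient.eq_zero_iff_mem.mpr (Ideal.mem_span_singleton_self _), sub_zero]

end Polynomial

open Polynomial in
/-- `F = ∏ⱼ (X^{eⱼ} + ⋯ + X^B)` satisfies `F (1 - X)^{r+1} ≡ X^{|e|} mod X^{B+1}`, so the
coefficient of `X^N` in `F (1 - X)^r`, which is the left-hand side, is `1`. -/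
theorem sum_piFinset_Icc_alternating_choose {ι : Type*} [Fintype ι] [DecidableEq ι]
    {R : Type*} [CommRing R] (e : ι → ℕ) {B N r : ℕ} (he : ∀ j, e j ≤ B + 1)
    (heN : ∑ j, e j ≤ N) (hNB : N ≤ B) (hr : r + 1 = Fintype.card ι) :
    ∑ l ∈ Fintype.piFinset fun j => Icc (e j) B,
      (if ∑ j, l j ≤ N then (-1) ^ (N - ∑ j, l j) * (r.choose (N - ∑ j, l j) : R) else 0) = 1 := by
  set F : R[X] := ∏ j, ∑ i ∈ Icc (e j) B, X ^ i
  have hF : F = ∑ l ∈ Fintype.piFinset fun j => Icc (e j) B, X ^ ∑ j, l j := by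
    simp only [F, prod_univ_sum, prod_pow_eq_pow_sum]
  have hFX : F * (1 - X) ^ r * (1 - X) = ∏ j, (X ^ e j - X ^ (B + 1)) := by
    rw [mul_assoc, ← pow_succ, hr, ← card_univ, ← prod_const, ← prod_mul_distrib]
    refine prod_congr rfl fun j _ => ?_
    rw [← Ico_add_one_right_eq_Icc, geom_sum_Ico_mul_neg _ (he j)]
  have hcoeff : ∀ t < B + 1,
      (F * (1 - X) ^ r * (1 - X)).coeff t = if t = ∑ j, e j then 1 else 0 := by
    intro t ht
    obtain ⟨c, hc⟩ := X_pow_dvd_prod_X_pow_sub_X_pow_sub (R := R) univ e (B + 1)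
    rw [hFX, sub_eq_iff_eq_add.mp hc, coeff_add, coeff_X_pow_mul', if_neg (by omega), zero_add,
      coeff_X_pow]
  rw [← coeff_sum_X_pow_mul_one_sub_X_pow, ← hF, coeff_eq_sum_coeff_mul_one_sub_X,
    sum_congr rfl fun t ht => hcoeff t (by rw [mem_range] at ht; omega), sum_ite_eq',
    if_pos (mem_range.mpr (by omega))]

def smolyakLevels (n lam : ℕ) : Finset (Fin n → ℕ) :=
  (Fintype.piFinset fun _ : Fin n => Icc 1 (lam + n)).filter
    (fun l => lam ≤ ∑ j, l j ∧ ∑ j, l j ≤ lam + n - 1)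

def smolyakWeight (n lam : ℕ) (l : Fin n → ℕ) : ℝ :=
  (-1) ^ (lam + n - 1 - ∑ j, l j) * ((n - 1).choose (lam + n - 1 - ∑ j, l j) : ℝ)

theorem smolyakRule_eq_sum {n : ℕ} (K : Fin n → ℕ → ℕ)
    (x v : ∀ (j : Fin n) (l : ℕ), Fin (K j l) → ℝ) (lam : ℕ) (f : (Fin n → ℝ) → ℝ) :
    smolyakRule K x v lam f =
      ∑ l ∈ smolyakLevels n lam, smolyakWeight n lam l * tensorRule K x v l f :=
  rfl

theorem sum_smolyakWeight_of_le {n lam : ℕ} (hn : 1 ≤ n) (e : Fin n → ℕ) (he : ∀ j, 1 ≤ e j)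
    (heM : ∑ j, e j ≤ lam + n - 1) :
    ∑ l ∈ (smolyakLevels n lam).filter (fun l => ∀ j, e j ≤ l j), smolyakWeight n lam l = 1 := by
  have he_le : ∀ j, e j ≤ lam + n + 1 := fun j =>
    (single_le_sum (fun j _ => Nat.zero_le (e j)) (mem_univ j)).trans (by omega)
  rw [← sum_piFinset_Icc_alternating_choose e he_le heM (by omega : lam + n - 1 ≤ lam + n)
    (by rw [Fintype.card_fin]; omega : n - 1 + 1 = Fintype.card (Fin n)), ← sum_filter]
  refine sum_subset (fun l hl => ?_) (fun l hl hl' => ?_)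
  · simp only [smolyakLevels, mem_filter, Fintype.mem_piFinset, mem_Icc] at hl ⊢
    exact ⟨fun j => ⟨hl.2 j, (hl.1.1 j).2⟩, hl.1.2.2⟩
  · simp only [smolyakLevels, mem_filter, Fintype.mem_piFinset, mem_Icc] at hl hl'
    have hlow : ∑ j, l j < lam := by
      by_contra h
      exact hl' ⟨⟨fun j => ⟨(he j).trans (hl.1 j).1, (hl.1 j).2⟩, not_lt.mp h, hl.2⟩,
        fun j => (hl.1 j).1⟩
    rw [smolyakWeight, Nat.choose_eq_zero_of_lt (by omega), Nat.cast_zero, mul_zero]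

/-- The paper's difference rule `Q^i - Q^{i-1}`, with `Q^0 = 0`. -/
def levelDiff (q : ℕ → ℝ) (i : ℕ) : ℝ :=
  q i - if i ≤ 1 then 0 else q (i - 1)

theorem sum_Icc_levelDiff (q : ℕ → ℝ) {l : ℕ} (hl : 1 ≤ l) :
    ∑ i ∈ Icc 1 l, levelDiff q i = q l := by
  induction l, hl using Nat.le_induction with
  | base => simp [levelDiff]
  | succ l hl ih =>
    rw [← Ico_add_one_right_eq_Icc, sum_Ico_succ_top (by omega), Ico_add_one_right_eq_Icc, ih,
      levelDiff, if_neg (by omega), Nat.add_sub_cancel, add_sub_cancel]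

theorem eq_sum_Icc_ite_levelDiff (q : ℕ → ℝ) {m l : ℕ} (hm : 1 ≤ m) (hl : 1 ≤ l)
    (hq : ∀ i, m ≤ i → q i = q m) :
    q l = ∑ i ∈ Icc 1 m, if i ≤ l then levelDiff q i else 0 := by
  rw [← sum_filter]
  rcases le_total l m with hlm | hml
  · have hfilter : (Icc 1 m).filter (· ≤ l) = Icc 1 l := by
      ext
      simp only [mem_filter, mem_Icc]
      omega
    rw [hfilter, sum_Icc_levelDiff q hl]
  · rw [(Icc 1 m).filter_true_of_mem fun i hi => (mem_Icc.mp hi).2.trans hml,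
      sum_Icc_levelDiff q hm, hq l hml]

theorem sum_smolyakWeight_mul_prod {n lam : ℕ} (hn : 1 ≤ n) (q : Fin n → ℕ → ℝ)
    (I : Fin n → ℝ) (m : Fin n → ℕ) (hm : ∀ j, 1 ≤ m j) (hq : ∀ j l, m j ≤ l → q j l = I j)
    (hmM : ∑ j, m j ≤ lam + n - 1) :
    ∑ l ∈ smolyakLevels n lam, smolyakWeight n lam l * ∏ j, q j (l j) = ∏ j, I j := by
  set box := Fintype.piFinset fun j => Icc 1 (m j)
  have hexpand : ∀ l ∈ smolyakLevels n lam, ∏ j, q j (l j) =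
      ∑ e ∈ box, if ∀ j, e j ≤ l j then ∏ j, levelDiff (q j) (e j) else 0 := by
    intro l hl
    simp only [smolyakLevels, mem_filter, Fintype.mem_piFinset, mem_Icc] at hl
    rw [prod_congr rfl fun j _ => eq_sum_Icc_ite_levelDiff (q j) (hm j) (hl.1 j).1
      fun i hi => (hq j i hi).trans (hq j (m j) le_rfl).symm, prod_univ_sum]
    simp only [prod_ite_zero, mem_univ, true_imp_iff]
    rfl
  have hweights : ∀ e ∈ box,
      ∑ l ∈ (smolyakLevels n lam).filter (fun l => ∀ j, e j ≤ l j), smolyakWeight n lam l = 1 := by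
    intro e he
    simp only [box, Fintype.mem_piFinset, mem_Icc] at he
    exact sum_smolyakWeight_of_le hn e (fun j => (he j).1)
      ((sum_le_sum fun j _ => (he j).2).trans hmM)
  calc ∑ l ∈ smolyakLevels n lam, smolyakWeight n lam l * ∏ j, q j (l j)
      = ∑ e ∈ box, (∑ l ∈ (smolyakLevels n lam).filter (fun l => ∀ j, e j ≤ l j),
          smolyakWeight n lam l) * ∏ j, levelDiff (q j) (e j) := by
        simp only [sum_congr rfl fun l hl => congrArg _ (hexpand l hl), mul_sum, sum_filter,
          sum_mul, mul_ite, mul_zero, ite_mul, zero_mul]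
        exact sum_comm
    _ = ∑ e ∈ box, ∏ j, levelDiff (q j) (e j) :=
        sum_congr rfl fun e he => by rw [hweights e he, one_mul]
    _ = ∏ j, I j := by
        rw [← prod_univ_sum]
        exact prod_congr rfl fun j _ => by rw [sum_Icc_levelDiff _ (hm j), hq j (m j) le_rfl]

section Quadrature

variable {n : ℕ} (K : Fin n → ℕ → ℕ) (x v : ∀ (j : Fin n) (l : ℕ), Fin (K j l) → ℝ)

theorem tensorRule_sum_const_mul {ι : Type*} (s : Finset ι) (c : ι → ℝ)
    (f : ι → (Fin n → ℝ) → ℝ) (l : Fin n → ℕ) :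
    tensorRule K x v l (fun y => ∑ a ∈ s, c a * f a y) =
      ∑ a ∈ s, c a * tensorRule K x v l (f a) := by
  simp only [tensorRule, mul_sum]
  rw [sum_comm]
  exact sum_congr rfl fun a _ => sum_congr rfl fun k _ => by ring

theorem smolyakRule_sum_const_mul {ι : Type*} (s : Finset ι) (c : ι → ℝ)
    (f : ι → (Fin n → ℝ) → ℝ) (lam : ℕ) :
    smolyakRule K x v lam (fun y => ∑ a ∈ s, c a * f a y) =
      ∑ a ∈ s, c a * smolyakRule K x v lam (f a) := by
  simp only [smolyakRule_eq_sum, tensorRule_sum_const_mul, mul_sum]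
  rw [sum_comm]
  exact sum_congr rfl fun a _ => sum_congr rfl fun l _ => by ring

theorem tensorRule_prod (g : Fin n → ℝ → ℝ) (l : Fin n → ℕ) :
    tensorRule K x v l (fun y => ∏ j, g j (y j)) =
      ∏ j, ∑ k : Fin (K j (l j)), v j (l j) k * g j (x j (l j) k) := by
  rw [tensorRule, prod_univ_sum]
  exact sum_congr rfl fun k _ => prod_mul_distrib.symm

theorem smolyakRule_prod_pow_eq_prod_integral {lam : ℕ} (hn : 1 ≤ n) (hlam : 1 ≤ lam)
    (P : Fin n → Measure ℝ)
    (hexact : ∀ (j : Fin n) (l : ℕ), 1 ≤ l → ∀ p : Polynomial ℝ,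
      p.natDegree ≤ 2 * l - 1 →
      (∑ k : Fin (K j l), v j l k * p.eval (x j l k)) = ∫ t, p.eval t ∂(P j))
    (α : Fin n → ℕ) (hα : ∑ j, α j ≤ 2 * lam - 1) :
    smolyakRule K x v lam (fun y => ∏ j, y j ^ α j) = ∏ j, ∫ t, t ^ α j ∂(P j) := by
  have hexact_pow : ∀ j l, α j / 2 + 1 ≤ l →
      ∑ k : Fin (K j l), v j l k * x j l k ^ α j = ∫ t, t ^ α j ∂(P j) := by
    intro j l hl
    simpa using hexact j l (by omega) (Polynomial.X ^ α j)
      (by rw [Polynomial.natDegree_X_pow]; omega)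
  have hlevels : ∑ j, (α j / 2 + 1) ≤ lam + n - 1 := by
    have : 2 * ∑ j, α j / 2 ≤ ∑ j, α j := by
      rw [mul_sum]
      exact sum_le_sum fun j _ => Nat.mul_div_le (α j) 2
    rw [sum_add_distrib, sum_const, card_univ, Fintype.card_fin, smul_eq_mul, mul_one]
    omega
  rw [smolyakRule_eq_sum]
  simp only [tensorRule_prod K x v fun j t => t ^ α j]
  exact sum_smolyakWeight_mul_prod hn _ _ _ (fun j => Nat.le_add_left 1 _) hexact_pow hlevels

end Quadrature

/-- If, for each coordinate `j` and each level `l ≥ 1`, the univariate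
quadrature rule `Q_j^{λ_l}` integrates exactly univariate polynomials of degree `≤ 2l−1`
with respect to `P_j`, then the Smolyak sparse-grid rule of level `λ` integrates exactly all
multivariate polynomials of total degree `≤ 2λ−1` with respect to `P = P_1 × ... × P_n`. -/
theorem stmt_11 {n : ℕ} (hn : 1 ≤ n)
    (P : Fin n → Measure ℝ) [∀ j, IsProbabilityMeasure (P j)]
    (K : Fin n → ℕ → ℕ)
    (x : ∀ (j : Fin n) (l : ℕ), Fin (K j l) → ℝ)
    (v : ∀ (j : Fin n) (l : ℕ), Fin (K j l) → ℝ)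
    (hexact : ∀ (j : Fin n) (l : ℕ), 1 ≤ l → ∀ p : Polynomial ℝ,
      p.natDegree ≤ 2 * l - 1 →
      (∑ k : Fin (K j l), v j l k * p.eval (x j l k)) = ∫ t, p.eval t ∂(P j))
    (hint : ∀ (j : Fin n) (p : Polynomial ℝ), Integrable (fun t => p.eval t) (P j))
    (lam : ℕ) (hlam : 1 ≤ lam) :
    ∀ p : MvPolynomial (Fin n) ℝ, p.totalDegree ≤ 2 * lam - 1 →
      smolyakRule K x v lam (fun y => MvPolynomial.eval y p) =
        ∫ y, MvPolynomial.eval y p ∂(Measure.pi P) := by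
  intro p hp
  have hint_monomial : ∀ α : Fin n →₀ ℕ,
      Integrable (fun y : Fin n → ℝ => ∏ j, y j ^ α j) (Measure.pi P) := fun α =>
    Integrable.fintype_prod (f := fun j t => t ^ α j) fun j => by
      simpa using hint j (Polynomial.X ^ α j)
  simp only [MvPolynomial.eval_eq']
  rw [smolyakRule_sum_const_mul, integral_finsetSum _ fun α _ => (hint_monomial α).const_mul _]
  refine sum_congr rfl fun α hα => ?_
  have hdeg : ∑ j, α j ≤ 2 * lam - 1 := by
    rw [← Finsupp.sum_fintype α (fun _ e => e) fun _ => rfl]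
    exact (MvPolynomial.le_totalDegree hα).trans hp
  rw [integral_const_mul, integral_fintype_prod_eq_prod (fun j t => t ^ α j),
    smolyakRule_prod_pow_eq_prod_integral K x v hn hlam P hexact α hdeg]
end
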